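/- Compression of a multiple almost-Riordan array: if (b | g; f₁, …, f_ℓ) has entries d_{n,k} and compressed entries d̂_{n,k} := d_{ℓn−(ℓ−1)k, k}, then d̂_{n,0} = [t^n] b̂(t), and for k ≥ 1 with k ≡ m (mod ℓ), 1 ≤ m ≤ ℓ, d̂_{n,k} = [t^n] t·ĝ·f̂₁⋯f̂_{m−1}·(f̂₁f̂₂⋯f̂_ℓ)^{(k−m)/ℓ}, where b̂(t) = Σ b_{ℓk} t^k, ĝ(t) = Σ g_{ℓk} t^k, and f̂_j(t) = Σ f_{j,ℓk+1} t^{k+1} are the compressed series. -/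

import Mathlib

open PowerSeries

/-- `g ∈ K[[t^ℓ]]`. -/
def InTl {K : Type*} [Field K] (ℓ : ℕ) (g : PowerSeries K) : Prop :=
  ∀ n : ℕ, ¬ ℓ ∣ n → coeff n g = 0

/-- A multiplier function: `f ∈ t·K[[t^ℓ]]` with `f'(0) ≠ 0`. -/
def IsMult {K : Type*} [Field K] (ℓ : ℕ) (f : PowerSeries K) : Prop :=
  constantCoeff f = 0 ∧ (∀ n : ℕ, n % ℓ ≠ 1 % ℓ → coeff n f = 0) ∧ coeff 1 f ≠ 0

/-- Column generating functions `(b, tg, tgf₁, tgf₁f₂, …)` of the multiple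
almost-Riordan array `(b | g; f₁, …, f_ℓ)`; the entry `d_{n,k}` of the array
is `coeff n (maCol ℓ b g f k)`. -/
noncomputable def maCol {K : Type*} [Field K] (ℓ : ℕ) (b g : PowerSeries K)
    (f : ℕ → PowerSeries K) : ℕ → PowerSeries K
  | 0 => b
  | k + 1 => X * g * ∏ j ∈ Finset.range ℓ, f j ^ ((k + ℓ - 1 - j) / ℓ)

/-- The compressed series `b̂(t) = Σ_k b_{ℓk} t^k` of `b ∈ K[[t^ℓ]]`. -/
noncomputable def hatSeries {K : Type*} [Field K] (ℓ : ℕ) (b : PowerSeries K) :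
    PowerSeries K :=
  PowerSeries.mk fun n => coeff (ℓ * n) b

/-- The compressed multiplier `f̂_j(t) = Σ_k f_{j,ℓk+1} t^{k+1}`. -/
noncomputable def hatMult {K : Type*} [Field K] (ℓ : ℕ) (f : PowerSeries K) :
    PowerSeries K :=
  PowerSeries.mk fun n => match n with
    | 0 => 0
    | k + 1 => coeff (ℓ * k + 1) f

/-!
Write `E = expand ℓ` for the substitution `t ↦ tˡ`. Since `g ∈ K[[tˡ]]` and `f_j ∈ t·K[[tˡ]]`,
`g = E ĝ` and `f_j = t · E (f̂_j / t)`. For `k = m + ℓq` with `1 ≤ m ≤ ℓ`, the exponent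
`⌊(k + ℓ - 2 - j) / ℓ⌋` of `f_j` in column `k` is `q + [j < m - 1]`, so column `k` is `tᵏ · E H`
and the claimed series is `tᵏ · H`, for the same
`H = ĝ · ∏_{j < m-1} (f̂_j / t) · (∏_{j < ℓ} (f̂_j / t))^q`.
Finally `ℓn - (ℓ-1)k = k + ℓ(n - k)`, so along this progression the coefficients of `tᵏ · E H`
are those of `tᵏ · H` (when `n < k` the truncated subtraction stays below `k` and both sides
vanish).
-/

theorem Nat.exists_eq_add_mul_of_mod_eq {ℓ k m : ℕ} (hmℓ : m ≤ ℓ) (hk : 1 ≤ k)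
    (h : k % ℓ = m % ℓ) : ∃ q, k = m + ℓ * q := by
  have hmk : m ≤ k := by
    rcases hmℓ.lt_or_eq with hlt | rfl
    · rw [Nat.mod_eq_of_lt hlt] at h
      exact h ▸ Nat.mod_le k ℓ
    · exact Nat.le_of_dvd hk (Nat.dvd_of_mod_eq_zero (h.trans (Nat.mod_self m)))
  obtain ⟨q, hq⟩ := (Nat.modEq_iff_dvd' hmk).mp h.symm
  exact ⟨q, by omega⟩

theorem Nat.add_mul_add_sub_div {ℓ r q j : ℕ} (hr : r ≤ ℓ) (hj : j < ℓ) :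
    (r + ℓ * q + ℓ - 1 - j) / ℓ = q + if j < r then 1 else 0 := by
  rw [show r + ℓ * q + ℓ - 1 - j = (r + ℓ - 1 - j) + ℓ * q by omega,
    Nat.add_mul_div_left _ _ (by omega), add_comm]
  congr 1
  split_ifs with hjr
  · exact Nat.div_eq_of_lt_le (by omega) (by omega)
  · exact Nat.div_eq_of_lt (by omega)

theorem Finset.prod_range_pow_add_ite {M : Type*} [CommMonoid M] (a : ℕ → M) {r ℓ : ℕ}
    (hr : r ≤ ℓ) (q : ℕ) :
    ∏ j ∈ range ℓ, a j ^ (q + if j < r then 1 else 0) =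
      (∏ j ∈ range r, a j) * (∏ j ∈ range ℓ, a j) ^ q := by
  simp only [pow_add, pow_ite, pow_one, pow_zero, prod_mul_distrib, prod_pow]
  rw [mul_comm, ← prod_filter]
  congr 2
  ext j
  simp only [mem_filter, mem_range]
  omega

theorem coeff_mul_sub_X_pow_mul_expand {R : Type*} [CommRing R] {ℓ : ℕ} (hℓ : ℓ ≠ 0)
    (H : PowerSeries R) (w n : ℕ) :
    coeff (ℓ * n - (ℓ - 1) * w) (X ^ w * expand ℓ hℓ H) = coeff n (X ^ w * H) := by
  have hw : (ℓ - 1) * w + w = ℓ * w := by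
    rw [Nat.sub_one_mul, Nat.sub_add_cancel (Nat.le_mul_of_pos_left w (by omega))]
  have hmono : ℓ * w ≤ ℓ * n ↔ w ≤ n := Nat.mul_le_mul_left_iff (by omega)
  rw [coeff_X_pow_mul', coeff_X_pow_mul', Nat.sub_sub, hw, ← Nat.mul_sub]
  split_ifs <;> first | omega | simp

theorem mul_mul_prod_mul_pow_prod {M : Type*} [CommMonoid M] (x a : M) (c : ℕ → M)
    (r s q : ℕ) :
    x * a * (∏ j ∈ Finset.range r, x * c j) * (∏ j ∈ Finset.range s, x * c j) ^ q =
      x ^ (r + s * q + 1) *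
        (a * (∏ j ∈ Finset.range r, c j) * (∏ j ∈ Finset.range s, c j) ^ q) := by
  simp only [Finset.prod_mul_distrib, Finset.prod_const, Finset.card_range, mul_pow, ← pow_mul,
    pow_add, pow_one]
  ac_rfl

section Compression

variable {K : Type*} [Field K] {ℓ : ℕ}

theorem InTl.expand_hatSeries (hℓ : ℓ ≠ 0) {g : PowerSeries K} (hg : InTl ℓ g) :
    expand ℓ hℓ (hatSeries ℓ g) = g := by
  ext n
  rw [coeff_expand]
  split_ifs with h
  · obtain ⟨i, rfl⟩ := h
    rw [Nat.mul_div_cancel_left i (Nat.pos_of_ne_zero hℓ), hatSeries, coeff_mk]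
  · exact (hg n h).symm

noncomputable def hatMultDivX (ℓ : ℕ) (f : PowerSeries K) : PowerSeries K :=
  mk fun i => coeff (ℓ * i + 1) f

theorem X_mul_hatMultDivX (ℓ : ℕ) (f : PowerSeries K) :
    X * hatMultDivX ℓ f = hatMult ℓ f := by
  ext (_ | i) <;> simp [hatMultDivX, hatMult, coeff_succ_X_mul]

theorem IsMult.X_mul_expand_hatMultDivX (hℓ : ℓ ≠ 0) {f : PowerSeries K} (hf : IsMult ℓ f) :
    X * expand ℓ hℓ (hatMultDivX ℓ f) = f := by
  ext (_ | i)
  · simp [hf.1]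
  · rw [coeff_succ_X_mul, coeff_expand]
    split_ifs with h
    · obtain ⟨j, rfl⟩ := h
      simp [hatMultDivX, Nat.mul_div_cancel_left j (Nat.pos_of_ne_zero hℓ)]
    · refine (hf.2.1 _ fun hmod => h ?_).symm
      simpa using (Nat.modEq_iff_dvd' (by omega)).mp hmod.symm

theorem maCol_add_mul_add_one (b g : PowerSeries K) (f : ℕ → PowerSeries K) {r : ℕ}
    (hr : r ≤ ℓ) (q : ℕ) :
    maCol ℓ b g f (r + ℓ * q + 1) =
      X * g * (∏ j ∈ Finset.range r, f j) * (∏ j ∈ Finset.range ℓ, f j) ^ q := by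
  rw [maCol, mul_assoc (X * g), ← Finset.prod_range_pow_add_ite f hr q]
  refine congrArg _ (Finset.prod_congr rfl fun j hj => ?_)
  rw [Nat.add_mul_add_sub_div hr (Finset.mem_range.mp hj)]

theorem maCol_eq_X_pow_mul_expand (hℓ : ℓ ≠ 0) (b : PowerSeries K) {g : PowerSeries K}
    {f : ℕ → PowerSeries K} (hg : InTl ℓ g) (hf : ∀ j < ℓ, IsMult ℓ (f j)) {r : ℕ}
    (hr : r ≤ ℓ) (q : ℕ) :
    maCol ℓ b g f (r + ℓ * q + 1) = X ^ (r + ℓ * q + 1) * expand ℓ hℓ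
      (hatSeries ℓ g * (∏ j ∈ Finset.range r, hatMultDivX ℓ (f j)) *
        (∏ j ∈ Finset.range ℓ, hatMultDivX ℓ (f j)) ^ q) := by
  have hfj : ∀ s ≤ ℓ, ∏ j ∈ Finset.range s, f j =
      ∏ j ∈ Finset.range s, X * expand ℓ hℓ (hatMultDivX ℓ (f j)) := fun s hs =>
    Finset.prod_congr rfl fun j hj =>
      ((hf j ((Finset.mem_range.mp hj).trans_le hs)).X_mul_expand_hatMultDivX hℓ).symm
  rw [maCol_add_mul_add_one b g f hr, hfj r hr, hfj ℓ le_rfl, mul_mul_prod_mul_pow_prod]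
  simp only [map_mul, map_pow, map_prod, hg.expand_hatSeries hℓ]

end Compression

theorem multiple_almost_riordan_compression_general {K : Type*} [Field K]
    (ℓ : ℕ)
    (b g : PowerSeries K) (f : ℕ → PowerSeries K)
    (hg : InTl ℓ g)
    (hf : ∀ j < ℓ, IsMult ℓ (f j)) :
    (∀ n : ℕ, coeff (ℓ * n - (ℓ - 1) * 0) (maCol ℓ b g f 0) =
      coeff n (hatSeries ℓ b)) ∧
    (∀ n k m : ℕ, 1 ≤ m → m ≤ ℓ → k % ℓ = m % ℓ → 1 ≤ k →
      coeff (ℓ * n - (ℓ - 1) * k) (maCol ℓ b g f k) =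
        coeff n (X * hatSeries ℓ g *
          (∏ j ∈ Finset.range (m - 1), hatMult ℓ (f j)) *
          (∏ j ∈ Finset.range ℓ, hatMult ℓ (f j)) ^ ((k - m) / ℓ))) := by
  refine ⟨fun n => by simp [maCol, hatSeries], fun n k m hm hmℓ hkm hk => ?_⟩
  have hℓ : ℓ ≠ 0 := by omega
  obtain ⟨q, rfl⟩ := Nat.exists_eq_add_mul_of_mod_eq hmℓ hk hkm
  obtain ⟨r, rfl⟩ : ∃ r, m = r + 1 := ⟨m - 1, by omega⟩
  rw [Nat.add_sub_cancel_left, Nat.mul_div_cancel_left q (Nat.pos_of_ne_zero hℓ),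
    Nat.add_sub_cancel, show r + 1 + ℓ * q = r + ℓ * q + 1 by ring,
    maCol_eq_X_pow_mul_expand hℓ b hg hf (by omega), coeff_mul_sub_X_pow_mul_expand,
    ← mul_mul_prod_mul_pow_prod]
  simp only [X_mul_hatMultDivX]

/-- Compression of a multiple almost-Riordan array `(b | g; f₁, …, f_ℓ)`:
with `d̂_{n,k} = d_{ℓn−(ℓ−1)k, k}`, one has `d̂_{n,0} = [tⁿ] b̂` and, for
`k ≥ 1` with `k ≡ m (mod ℓ)`, `1 ≤ m ≤ ℓ`,
`d̂_{n,k} = [tⁿ] t·ĝ·f̂₁⋯f̂_{m−1}·(f̂₁f̂₂⋯f̂_ℓ)^{(k−m)/ℓ}`. -/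
theorem multiple_almost_riordan_compression {K : Type*} [Field K] [CharZero K]
    (ℓ : ℕ) (hℓ : 1 ≤ ℓ)
    (b g : PowerSeries K) (f : ℕ → PowerSeries K)
    (hb : InTl ℓ b) (hb0 : constantCoeff b ≠ 0)
    (hg : InTl ℓ g) (hg0 : constantCoeff g ≠ 0)
    (hf : ∀ j < ℓ, IsMult ℓ (f j)) :
    (∀ n : ℕ, coeff (ℓ * n - (ℓ - 1) * 0) (maCol ℓ b g f 0) =
      coeff n (hatSeries ℓ b)) ∧
    (∀ n k m : ℕ, 1 ≤ m → m ≤ ℓ → k % ℓ = m % ℓ → 1 ≤ k →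
      coeff (ℓ * n - (ℓ - 1) * k) (maCol ℓ b g f k) =
        coeff n (X * hatSeries ℓ g *
          (∏ j ∈ Finset.range (m - 1), hatMult ℓ (f j)) *
          (∏ j ∈ Finset.range ℓ, hatMult ℓ (f j)) ^ ((k - m) / ℓ))) :=
  multiple_almost_riordan_compression_general ℓ b g f hg hf
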